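/- arXiv:1501.04639 — 5 statements merged into one kernel-verified Lean document; each statement's English description precedes it below -/
import Mathlib

section
/- For every x > 0, ∫₀^∞ (1 - cos(x r)) f(r) dr ≥ (2/π²) ∫₀^∞ min(1, (x r)²) f(r) dr, for any non-increasing function f : (0,∞) → [0,∞). -/
/-!
Since `f` is non-increasing, every superlevel set `{r > 0 | t < f r}` is an initial interval of
`(0, ∞)`, so by the layer cake formula it suffices to compare the two weights on the intervals
`(0, T)`. After the substitution `t = x r` this is `(2/π²) ∫₀ˢ min(1, t²) dt ≤ s - sin s`: for
`s ≤ π` it holds pointwise since `1 - cos t ≥ 2t²/π²`, and for `s ≥ π` because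
`s - sin s ≥ s - 1 ≥ 2s/π²`.
-/

open MeasureTheory Set Real

theorem Real.eq_Ioi_or_exists_Ioo_subset_subset_Ioc {a : ℝ} {I : Set ℝ} (hI : I ⊆ Ioi a)
    (hlow : ∀ r ∈ I, ∀ s ∈ Ioi a, s ≤ r → s ∈ I) :
    I = Ioi a ∨ ∃ T, Ioo a T ⊆ I ∧ I ⊆ Ioc a T := by
  rcases I.eq_empty_or_nonempty with rfl | hne
  · exact Or.inr ⟨a, by simp, empty_subset _⟩
  by_cases hbdd : BddAbove I
  · refine Or.inr ⟨sSup I, fun s hs => ?_, fun r hr => ⟨hI hr, le_csSup hbdd hr⟩⟩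
    obtain ⟨r, hr, hsr⟩ := exists_lt_of_lt_csSup hne hs.2
    exact hlow r hr s hs.1 hsr.le
  · refine Or.inl (Subset.antisymm hI fun s hs => ?_)
    obtain ⟨r, hr, hsr⟩ := not_bddAbove_iff.1 hbdd s
    exact hlow r hr s hs hsr.le

section Comparison

variable {μ ν : Measure ℝ} [NullSingletonClass ν] {a : ℝ}

theorem measure_le_of_forall_measure_Ioo_le (h : ∀ T, a < T → ν (Ioo a T) ≤ μ (Ioo a T))
    {I : Set ℝ} (hI : I ⊆ Ioi a) (hlow : ∀ r ∈ I, ∀ s ∈ Ioi a, s ≤ r → s ∈ I) :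
    ν I ≤ μ I := by
  rcases Real.eq_Ioi_or_exists_Ioo_subset_subset_Ioc hI hlow with rfl | ⟨T, hTI, hIT⟩
  · have hmono : Monotone fun T : ℝ => Ioo a T := fun _ _ hT => Ioo_subset_Ioo_right hT
    rw [← iUnion_Ioo_right, hmono.measure_iUnion, hmono.measure_iUnion]
    refine iSup_mono fun T => ?_
    rcases le_or_gt T a with hT | hT
    · simp [Ioo_eq_empty_of_le hT]
    · exact h T hT
  rcases le_or_gt T a with hT | hT
  · rw [Ioc_eq_empty_of_le hT, subset_empty_iff] at hIT
    simp [hIT]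
  calc ν I ≤ ν (Ioc a T) := measure_mono hIT
    _ = ν (Ioo a T) := measure_congr Ioo_ae_eq_Ioc.symm
    _ ≤ μ (Ioo a T) := h T hT
    _ ≤ μ I := measure_mono hTI

theorem setLIntegral_Ioi_ofReal_le_of_antitoneOn (h : ∀ T, a < T → ν (Ioo a T) ≤ μ (Ioo a T))
    {f : ℝ → ℝ} (hf_nonneg : ∀ r, a < r → 0 ≤ f r) (hf_anti : AntitoneOn f (Ioi a)) :
    ∫⁻ r in Ioi a, ENNReal.ofReal (f r) ∂ν ≤ ∫⁻ r in Ioi a, ENNReal.ofReal (f r) ∂μ := by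
  have hnonneg (ρ : Measure ℝ) : 0 ≤ᵐ[ρ.restrict (Ioi a)] f :=
    (ae_restrict_iff' measurableSet_Ioi).2 (ae_of_all _ hf_nonneg)
  rw [lintegral_eq_lintegral_meas_lt _ (hnonneg ν)
      (aemeasurable_restrict_of_antitoneOn measurableSet_Ioi hf_anti),
    lintegral_eq_lintegral_meas_lt _ (hnonneg μ)
      (aemeasurable_restrict_of_antitoneOn measurableSet_Ioi hf_anti)]
  refine lintegral_mono fun t => ?_
  simp only [Measure.restrict_apply' measurableSet_Ioi]
  exact measure_le_of_forall_measure_Ioo_le h inter_subset_right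
    fun r hr s hs hsr => ⟨hr.1.trans_le (hf_anti hs hr.2 hsr), hs⟩

end Comparison

theorem integral_two_div_pi_sq_mul_min_le_integral_one_sub_cos {s : ℝ} (hs : 0 ≤ s) :
    ∫ t in 0..s, 2 / π ^ 2 * min 1 (t ^ 2) ≤ ∫ t in 0..s, (1 - cos t) := by
  have hint_cos : IntervalIntegrable (fun t => 1 - cos t) volume 0 s :=
    (by fun_prop : Continuous fun t => 1 - cos t).intervalIntegrable 0 s
  have hint_min : IntervalIntegrable (fun t => 2 / π ^ 2 * min 1 (t ^ 2)) volume 0 s :=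
    (by fun_prop : Continuous fun t : ℝ => 2 / π ^ 2 * min 1 (t ^ 2)).intervalIntegrable 0 s
  rcases le_total s π with hsπ | hπs
  · refine intervalIntegral.integral_mono_on hs hint_min hint_cos fun t ht => ?_
    have hcos := cos_le_one_sub_mul_cos_sq (x := t) (by rw [abs_of_nonneg ht.1]; linarith [ht.2])
    have : 2 / π ^ 2 * min 1 (t ^ 2) ≤ 2 / π ^ 2 * t ^ 2 := by gcongr; exact min_le_right _ _
    linarith
  · calc ∫ t in 0..s, 2 / π ^ 2 * min 1 (t ^ 2)
        ≤ ∫ _ in 0..s, 2 / π ^ 2 :=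
          intervalIntegral.integral_mono_on hs hint_min intervalIntegrable_const fun t _ =>
            mul_le_of_le_one_right (by positivity) (min_le_left _ _)
      _ = 2 / π ^ 2 * s := by
          rw [intervalIntegral.integral_const, smul_eq_mul, sub_zero, mul_comm]
      _ ≤ s - 1 := by
          have hπ3 := pi_gt_three
          rw [div_mul_eq_mul_div, div_le_iff₀ (by positivity)]
          have h9 : 9 ≤ π ^ 2 := by nlinarith
          nlinarith [mul_nonneg (by linarith : 0 ≤ s - 1) (by linarith : 0 ≤ π ^ 2 - 9)]
      _ ≤ s - sin s := by linarith [sin_le_one s]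
      _ = ∫ t in 0..s, (1 - cos t) := by
          simp [intervalIntegral.integral_sub intervalIntegrable_const
            (continuous_cos.intervalIntegrable 0 s)]

theorem integral_two_div_pi_sq_mul_min_le_integral_one_sub_cos_mul {x T : ℝ} (hx : 0 < x)
    (hT : 0 ≤ T) :
    ∫ r in 0..T, 2 / π ^ 2 * min 1 ((x * r) ^ 2) ≤ ∫ r in 0..T, (1 - cos (x * r)) := by
  rw [intervalIntegral.integral_comp_mul_left (fun t => 2 / π ^ 2 * min 1 (t ^ 2)) hx.ne',
    intervalIntegral.integral_comp_mul_left (fun t => 1 - cos t) hx.ne', mul_zero,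
    smul_eq_mul, smul_eq_mul]
  gcongr
  exact integral_two_div_pi_sq_mul_min_le_integral_one_sub_cos (by positivity)

theorem setLIntegral_Ioo_ofReal_eq_intervalIntegral {g : ℝ → ℝ} (hg : Continuous g)
    (hg_nonneg : ∀ r, 0 ≤ g r) {a b : ℝ} (hab : a ≤ b) :
    ∫⁻ r in Ioo a b, ENNReal.ofReal (g r) = ENNReal.ofReal (∫ r in a..b, g r) := by
  rw [setLIntegral_congr Ioo_ae_eq_Ioc, intervalIntegral.integral_of_le hab,
    ofReal_integral_eq_lintegral_ofReal hg.integrableOn_Ioc (ae_of_all _ hg_nonneg)]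

theorem setLIntegral_ofReal_mul_eq_withDensity {α : Type*} [MeasurableSpace α] (μ : Measure α)
    {g : α → ℝ} (hg : Measurable g) (hg_nonneg : ∀ a, 0 ≤ g a) (f : α → ℝ) {s : Set α}
    (hs : MeasurableSet s) :
    ∫⁻ a in s, ENNReal.ofReal (g a * f a) ∂μ =
      ∫⁻ a in s, ENNReal.ofReal (f a) ∂μ.withDensity fun a => ENNReal.ofReal (g a) := by
  rw [setLIntegral_withDensity_eq_setLIntegral_mul_non_measurable _ hg.ennreal_ofReal _ hs
    (ae_of_all _ fun _ => ENNReal.ofReal_lt_top)]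
  simp only [Pi.mul_apply, ENNReal.ofReal_mul (hg_nonneg _)]

theorem stmt0 (f : ℝ → ℝ) (hf_nonneg : ∀ r : ℝ, 0 < r → 0 ≤ f r)
    (hf_anti : AntitoneOn f (Ioi 0)) (x : ℝ) (hx : 0 < x) :
    ENNReal.ofReal (2 / π ^ 2) *
        ∫⁻ r in Ioi (0 : ℝ), ENNReal.ofReal (min 1 ((x * r) ^ 2) * f r) ≤
      ∫⁻ r in Ioi (0 : ℝ), ENNReal.ofReal ((1 - Real.cos (x * r)) * f r) := by
  set g : ℝ → ℝ := fun r => 2 / π ^ 2 * min 1 ((x * r) ^ 2)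
  set h : ℝ → ℝ := fun r => 1 - cos (x * r)
  have hg : Continuous g := by fun_prop
  have hh : Continuous h := by fun_prop
  have hg_nonneg (r : ℝ) : 0 ≤ g r := by positivity
  have hh_nonneg (r : ℝ) : 0 ≤ h r := sub_nonneg.2 (cos_le_one _)
  have hlhs : ENNReal.ofReal (2 / π ^ 2) *
      ∫⁻ r in Ioi (0 : ℝ), ENNReal.ofReal (min 1 ((x * r) ^ 2) * f r) =
      ∫⁻ r in Ioi (0 : ℝ), ENNReal.ofReal (g r * f r) := by
    rw [← lintegral_const_mul' _ _ ENNReal.ofReal_ne_top]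
    simp only [g, mul_assoc, ENNReal.ofReal_mul (by positivity : (0 : ℝ) ≤ 2 / π ^ 2)]
  rw [hlhs, setLIntegral_ofReal_mul_eq_withDensity _ hg.measurable hg_nonneg f measurableSet_Ioi,
    setLIntegral_ofReal_mul_eq_withDensity _ hh.measurable hh_nonneg f measurableSet_Ioi]
  refine setLIntegral_Ioi_ofReal_le_of_antitoneOn (fun T hT => ?_) hf_nonneg hf_anti
  rw [withDensity_apply _ measurableSet_Ioo, withDensity_apply _ measurableSet_Ioo,
    setLIntegral_Ioo_ofReal_eq_intervalIntegral hg hg_nonneg hT.le,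
    setLIntegral_Ioo_ofReal_eq_intervalIntegral hh hh_nonneg hT.le]
  exact ENNReal.ofReal_le_ofReal
    (integral_two_div_pi_sq_mul_min_le_integral_one_sub_cos_mul hx hT.le)
end

section
/- Let f : (0,∞) → [0,1] be non-increasing and suppose its Laplace transform satisfies Lf(λs)/Lf(λ) ≤ c·s^{−1/2} for all λ > 0 and s > 1, where c > 0. Then there exists a constant c' > 0 depending only on c such that f(t) ≥ c'·(1/t)·Lf(1/t) for all t > 0. -/
open MeasureTheory Set Real

/-! Split the Laplace integral `Lf(λ)` at `a`. On `(0, a]` one has `e^{-λu} ≤ e · e^{-u/a}`, so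
that part is at most `e · Lf(1/a)`; on `(a, ∞)` monotonicity gives `f ≤ f(a)`, so the tail is at
most `f(a)/λ`. With `a = t` and `λ = 1/(mt)` for a large `m`, the ratio hypothesis bounds
`e · Lf(1/t)` by `Lf(1/(mt))/2`, which is absorbed: `Lf(1/(mt)) ≤ 2mt · f(t)`. Finally
`Lf(1/t) ≤ Lf(1/(mt))` because `Lf` is non-increasing. -/

theorem mul_rpow_neg_half_le_one {k m : ℝ} (hkm : k ^ 2 ≤ m) (hm : 0 < m) :
    k * m ^ (-(1 / 2) : ℝ) ≤ 1 := by
  rw [rpow_neg hm.le, ← sqrt_eq_rpow, mul_inv_le_iff₀ (sqrt_pos.2 hm), one_mul]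
  exact le_sqrt_of_sq_le hkm

noncomputable def laplaceTransform (f : ℝ → ℝ) (lam : ℝ) : ℝ :=
  ∫ t in Ioi (0 : ℝ), exp (-lam * t) * f t

section

variable {f : ℝ → ℝ}

theorem AntitoneOn.integrableOn_exp_neg_mul_mul {a C lam : ℝ} (hanti : AntitoneOn f (Ioi a))
    (hbdd : ∀ t, a < t → ‖f t‖ ≤ C) (hlam : 0 < lam) :
    IntegrableOn (fun t => exp (-lam * t) * f t) (Ioi a) :=
  (exp_neg_integrableOn_Ioi a hlam).mul_bdd
    (aemeasurable_restrict_of_antitoneOn measurableSet_Ioi hanti).aestronglyMeasurable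
    ((ae_restrict_iff' measurableSet_Ioi).2 (Filter.Eventually.of_forall hbdd))

theorem laplaceTransform_antitoneOn (hnonneg : ∀ t, 0 < t → 0 ≤ f t)
    (hint : ∀ lam, 0 < lam → IntegrableOn (fun t => exp (-lam * t) * f t) (Ioi 0)) :
    AntitoneOn (laplaceTransform f) (Ioi 0) := by
  intro l₁ hl₁ l₂ hl₂ hle
  refine setIntegral_mono_on (hint l₂ hl₂) (hint l₁ hl₁) measurableSet_Ioi fun u hu => ?_
  have hu : 0 < u := hu
  gcongr
  exact hnonneg u hu

theorem setIntegral_Ioc_le_exp_one_mul_laplaceTransform {a lam : ℝ}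
    (hnonneg : ∀ t, 0 < t → 0 ≤ f t)
    (hint : ∀ lam, 0 < lam → IntegrableOn (fun t => exp (-lam * t) * f t) (Ioi 0))
    (ha : 0 < a) (hlam : 0 < lam) :
    ∫ u in Ioc 0 a, exp (-lam * u) * f u ≤ exp 1 * laplaceTransform f a⁻¹ := by
  have hsub : Ioc (0 : ℝ) a ⊆ Ioi 0 := Ioc_subset_Ioi_self
  have hint_a := hint a⁻¹ (inv_pos.2 ha)
  calc ∫ u in Ioc 0 a, exp (-lam * u) * f u
      ≤ ∫ u in Ioc 0 a, exp 1 * (exp (-a⁻¹ * u) * f u) := by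
        refine setIntegral_mono_on ((hint lam hlam).mono_set hsub)
          ((hint_a.mono_set hsub).const_mul _) measurableSet_Ioc fun u hu => ?_
        rw [← mul_assoc, ← exp_add]
        gcongr
        · exact hnonneg u hu.1
        · have : a⁻¹ * u ≤ 1 := by rw [inv_mul_le_one₀ ha]; exact hu.2
          nlinarith [hu.1]
    _ = exp 1 * ∫ u in Ioc 0 a, exp (-a⁻¹ * u) * f u := integral_const_mul _ _
    _ ≤ exp 1 * laplaceTransform f a⁻¹ := by
        gcongr
        refine setIntegral_mono_set hint_a ?_ hsub.eventuallyLE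
        filter_upwards [ae_restrict_mem measurableSet_Ioi] with u hu
        exact mul_nonneg (exp_pos _).le (hnonneg u hu)

theorem setIntegral_Ioi_le_div_of_antitoneOn {a lam : ℝ} (hanti : AntitoneOn f (Ioi 0))
    (hnonneg : ∀ t, 0 < t → 0 ≤ f t) (ha : 0 < a) (hlam : 0 < lam) :
    ∫ u in Ioi a, exp (-lam * u) * f u ≤ f a / lam := by
  have hanti_a : AntitoneOn f (Ioi a) := hanti.mono (Ioi_subset_Ioi ha.le)
  have hfa : ∀ u, a < u → f u ≤ f a := fun u hu => hanti ha (ha.trans hu) hu.le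
  have hbdd : ∀ u, a < u → ‖f u‖ ≤ f a := fun u hu => by
    rw [norm_of_nonneg (hnonneg u (ha.trans hu))]; exact hfa u hu
  calc ∫ u in Ioi a, exp (-lam * u) * f u
      ≤ ∫ u in Ioi a, f a * exp (-lam * u) := by
        refine setIntegral_mono_on (hanti_a.integrableOn_exp_neg_mul_mul hbdd hlam)
          ((exp_neg_integrableOn_Ioi a hlam).const_mul _) measurableSet_Ioi fun u hu => ?_
        rw [mul_comm]
        gcongr
        exact hfa u hu
    _ = f a * (exp (-lam * a) / lam) := by
        rw [integral_const_mul, integral_exp_mul_Ioi (neg_lt_zero.2 hlam), neg_div_neg_eq]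
    _ ≤ f a / lam := by
        rw [← mul_div_assoc]
        gcongr
        exact mul_le_of_le_one_right (hnonneg a ha) (exp_le_one_iff.2 (by nlinarith))

theorem laplaceTransform_le_exp_one_mul_add_div {a lam : ℝ} (hanti : AntitoneOn f (Ioi 0))
    (hnonneg : ∀ t, 0 < t → 0 ≤ f t)
    (hint : ∀ lam, 0 < lam → IntegrableOn (fun t => exp (-lam * t) * f t) (Ioi 0))
    (ha : 0 < a) (hlam : 0 < lam) :
    laplaceTransform f lam ≤ exp 1 * laplaceTransform f a⁻¹ + f a / lam := by
  have hint_lam := hint lam hlam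
  rw [laplaceTransform, ← Ioc_union_Ioi_eq_Ioi ha.le, setIntegral_union Ioc_disjoint_Ioi_same
    measurableSet_Ioi (hint_lam.mono_set Ioc_subset_Ioi_self)
    (hint_lam.mono_set (Ioi_subset_Ioi ha.le))]
  exact add_le_add (setIntegral_Ioc_le_exp_one_mul_laplaceTransform hnonneg hint ha hlam)
    (setIntegral_Ioi_le_div_of_antitoneOn hanti hnonneg ha hlam)

theorem laplaceTransform_inv_le_of_le_mul {m r t : ℝ} (hanti : AntitoneOn f (Ioi 0))
    (hnonneg : ∀ t, 0 < t → 0 ≤ f t)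
    (hint : ∀ lam, 0 < lam → IntegrableOn (fun t => exp (-lam * t) * f t) (Ioi 0))
    (hm : 1 ≤ m) (ht : 0 < t) (hr : 2 * exp 1 * r ≤ 1)
    (hratio : laplaceTransform f t⁻¹ ≤ r * laplaceTransform f (m * t)⁻¹) :
    laplaceTransform f t⁻¹ ≤ 2 * m * t * f t := by
  set X := laplaceTransform f (m * t)⁻¹
  have hmt : 0 < m * t := by positivity
  have hX : 0 ≤ X := setIntegral_nonneg measurableSet_Ioi fun u hu =>
    mul_nonneg (exp_pos _).le (hnonneg u hu)
  have hmono : laplaceTransform f t⁻¹ ≤ X :=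
    laplaceTransform_antitoneOn hnonneg hint (inv_pos.2 hmt) (inv_pos.2 ht)
      (inv_anti₀ ht (le_mul_of_one_le_left ht.le hm))
  have hsplit : X ≤ exp 1 * laplaceTransform f t⁻¹ + f t * (m * t) := by
    simpa only [div_inv_eq_mul] using
      laplaceTransform_le_exp_one_mul_add_div hanti hnonneg hint ht (inv_pos.2 hmt)
  have hhalf : exp 1 * laplaceTransform f t⁻¹ ≤ X / 2 :=
    calc exp 1 * laplaceTransform f t⁻¹ ≤ exp 1 * (r * X) := by gcongr
      _ = (2 * exp 1 * r) * X / 2 := by ring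
      _ ≤ X / 2 := by gcongr; exact mul_le_of_le_one_left hX hr
  linarith

end

theorem stmt7 (c : ℝ) (hc : 0 < c) :
    ∃ c' : ℝ, 0 < c' ∧
      ∀ f : ℝ → ℝ, (∀ t : ℝ, 0 < t → f t ∈ Icc (0 : ℝ) 1) → AntitoneOn f (Ioi 0) →
        (∀ lam s : ℝ, 0 < lam → 1 < s →
          (∫ t in Ioi (0 : ℝ), Real.exp (-(lam * s) * t) * f t) ≤
            c * s ^ (-(1 / 2) : ℝ) * ∫ t in Ioi (0 : ℝ), Real.exp (-lam * t) * f t) →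
        ∀ t : ℝ, 0 < t →
          c' * (1 / t) * (∫ u in Ioi (0 : ℝ), Real.exp (-(1 / t) * u) * f u) ≤ f t := by
  set m : ℝ := (2 * c * exp 1) ^ 2 + 1
  have hm : 1 < m := lt_add_of_pos_left 1 (by positivity)
  have hdecay : 2 * c * exp 1 * m ^ (-(1 / 2) : ℝ) ≤ 1 :=
    mul_rpow_neg_half_le_one (le_add_of_nonneg_right zero_le_one) (by linarith)
  refine ⟨(2 * m)⁻¹, by positivity, fun f hf hanti hL t ht => ?_⟩
  have hnonneg : ∀ u, 0 < u → 0 ≤ f u := fun u hu => (hf u hu).1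
  have hint : ∀ lam, 0 < lam → IntegrableOn (fun u => exp (-lam * u) * f u) (Ioi 0) :=
    fun lam => hanti.integrableOn_exp_neg_mul_mul (C := 1) fun u hu => by
      rw [norm_of_nonneg (hf u hu).1]; exact (hf u hu).2
  have hratio :
      laplaceTransform f t⁻¹ ≤ c * m ^ (-(1 / 2) : ℝ) * laplaceTransform f (m * t)⁻¹ := by
    have hinv : (m * t)⁻¹ * m = t⁻¹ := by field_simp
    have := hL (m * t)⁻¹ m (by positivity) hm
    rwa [hinv] at this
  have hbound := laplaceTransform_inv_le_of_le_mul hanti hnonneg hint hm.le ht (by linarith) hratio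
  rw [one_div]
  calc (2 * m)⁻¹ * t⁻¹ * laplaceTransform f t⁻¹ ≤ (2 * m)⁻¹ * t⁻¹ * (2 * m * t * f t) := by
        gcongr
    _ = f t := by field_simp
end

section
/- Let f : (0,∞) → [0,1] be non-increasing with Laplace transform Lf(λ) = ∫₀^∞ e^{−λt} f(t) dt. Then for every t > 0, f(t) ≤ (e/(e−1))·(1/t)·Lf(1/t). -/
open MeasureTheory Set Real

theorem stmt8 (f : ℝ → ℝ) (hf : ∀ t : ℝ, 0 < t → f t ∈ Icc (0 : ℝ) 1)
    (hanti : AntitoneOn f (Ioi 0)) (t : ℝ) (ht : 0 < t) :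
    f t ≤ (Real.exp 1 / (Real.exp 1 - 1)) * (1 / t) *
      ∫ u in Ioi (0 : ℝ), Real.exp (-(1 / t) * u) * f u := by
  have hb : (0:ℝ) < 1 / t := by positivity
  set g : ℝ → ℝ := fun u => Real.exp (-(1 / t) * u) * f u with hg
  -- measurability
  have hfm : AEMeasurable f (volume.restrict (Ioi (0:ℝ))) :=
    aemeasurable_restrict_of_antitoneOn measurableSet_Ioi hanti
  have hgm : AEMeasurable g (volume.restrict (Ioi (0:ℝ))) :=
    ((Real.measurable_exp.comp (measurable_const.mul measurable_id)).aemeasurable).mul hfm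
  -- integrability on Ioi 0
  have hexpint : IntegrableOn (fun u => Real.exp (-(1/t) * u)) (Ioi (0:ℝ)) :=
    exp_neg_integrableOn_Ioi 0 hb
  have hbound : ∀ᵐ u ∂(volume.restrict (Ioi (0:ℝ))),
      ‖g u‖ ≤ Real.exp (-(1/t) * u) := by
    filter_upwards [ae_restrict_mem measurableSet_Ioi] with u hu
    have h1 := hf u hu
    rw [hg]
    simp only [norm_mul, Real.norm_eq_abs, abs_of_nonneg (Real.exp_nonneg _),
      abs_of_nonneg h1.1]
    nlinarith [Real.exp_pos (-(1/t)*u), h1.2]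
  have hgint : IntegrableOn g (Ioi (0:ℝ)) :=
    Integrable.mono' hexpint hgm.aestronglyMeasurable hbound
  -- nonnegativity of g a.e. on Ioi 0
  have hgnn : ∀ᵐ u ∂(volume.restrict (Ioi (0:ℝ))), 0 ≤ g u := by
    filter_upwards [ae_restrict_mem measurableSet_Ioi] with u hu
    exact mul_nonneg (Real.exp_nonneg _) (hf u hu).1
  -- restrict integral to Ioc 0 t
  have hsub : Ioc (0:ℝ) t ⊆ Ioi 0 := Ioc_subset_Ioi_self
  have hstep1 : ∫ u in Ioc (0:ℝ) t, g u ≤ ∫ u in Ioi (0:ℝ), g u :=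
    setIntegral_mono_set hgint hgnn (HasSubset.Subset.eventuallyLE hsub)
  -- lower bound on Ioc 0 t
  have hstep2 : ∫ u in Ioc (0:ℝ) t, Real.exp (-(1/t) * u) * f t ≤ ∫ u in Ioc (0:ℝ) t, g u := by
    apply setIntegral_mono_on
    · exact ((hexpint.mono_set hsub).mul_const _)
    · exact hgint.mono_set hsub
    · exact measurableSet_Ioc
    · intro u hu
      have hft : f t ≤ f u := hanti (hu.1) ht hu.2
      exact mul_le_mul_of_nonneg_left hft (Real.exp_nonneg _)
  -- compute the explicit integral
  have hcomp : ∫ u in Ioc (0:ℝ) t, Real.exp (-(1/t) * u) = t * (1 - Real.exp (-1)) := by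
    rw [← intervalIntegral.integral_of_le ht.le]
    have : ∀ u : ℝ, Real.exp (-(1/t) * u) = (fun x => Real.exp (-x)) ((1/t) * u) := by
      intro u; simp [neg_mul]
    simp_rw [this]
    rw [intervalIntegral.integral_comp_mul_left (fun x => Real.exp (-x)) (ne_of_gt hb)]
    rw [mul_zero, one_div, inv_mul_cancel₀ (ne_of_gt ht)]
    rw [intervalIntegral.integral_comp_neg (fun x => Real.exp x)]
    rw [integral_exp]
    simp only [neg_zero, Real.exp_zero, inv_inv, smul_eq_mul]
    try ring
  have hval : ∫ u in Ioc (0:ℝ) t, Real.exp (-(1/t) * u) * f t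
      = f t * (t * (1 - Real.exp (-1))) := by
    rw [integral_mul_const, hcomp]; ring
  have hkey : f t * (t * (1 - Real.exp (-1))) ≤ ∫ u in Ioi (0:ℝ), g u := by
    rw [← hval]; exact le_trans hstep2 hstep1
  -- algebra
  have he1 : (1:ℝ) < Real.exp 1 := by
    have := Real.add_one_le_exp (1:ℝ); linarith
  have hem : Real.exp (-1) = (Real.exp 1)⁻¹ := by
    rw [Real.exp_neg]
  have hpos : 0 < t * (1 - Real.exp (-1)) := by
    rw [hem]
    have : (Real.exp 1)⁻¹ < 1 := inv_lt_one_of_one_lt₀ he1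
    nlinarith
  rw [div_mul_eq_mul_div, div_mul_eq_mul_div, le_div_iff₀ (by linarith)]
  calc f t * (Real.exp 1 - 1)
      = (Real.exp 1 / t) * (f t * (t * (1 - Real.exp (-1)))) := by
        rw [hem]; field_simp
    _ ≤ (Real.exp 1 / t) * ∫ u in Ioi (0:ℝ), g u := by
        apply mul_le_mul_of_nonneg_left hkey (by positivity)
    _ = Real.exp 1 * (1 * ∫ u in Ioi (0:ℝ), g u) / t := by ring
    _ = Real.exp 1 * (1 / t) * ∫ u in Ioi (0:ℝ), g u := by ring
end

section
/- Let ψ : (0,∞) → (0,∞) be regularly varying at 0 with index 1 and set L(u) = ∫_u^∞ dr/ψ(r) (assumed finite for u > 0). Then u/(ψ(u)·L(u)) → 0 as u → 0⁺. -/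
/-!
Substituting `r = u t` gives `ψ u · L u / u = ∫_1^∞ ψ u / ψ (u t) dt`. By regular variation the
integrand tends to `1 / t` as `u → 0⁺`, which is not integrable on `(1, ∞)`, so by Fatou's lemma
the integral tends to `∞`.
-/

open MeasureTheory Set Filter Topology

theorem tendsto_integral_atTop_of_tendsto_ae_of_not_integrable {α ι : Type*} [MeasurableSpace α]
    {μ : Measure α} {l : Filter ι} [l.IsCountablyGenerated] {f : ι → α → ℝ} {g : α → ℝ}
    (hf : ∀ᶠ i in l, Integrable (f i) μ) (hf_nonneg : ∀ᶠ i in l, 0 ≤ᵐ[μ] f i)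
    (hlim : ∀ᵐ a ∂μ, Tendsto (fun i => f i a) l (𝓝 (g a))) (hg : ¬ Integrable g μ) :
    Tendsto (fun i => ∫ a, f i a ∂μ) l atTop := by
  refine tendsto_atTop.2 fun M => ?_
  by_contra hM
  -- Along a sequence keeping the integrals below `M`, Fatou's lemma bounds `∫⁻ g` by `M`.
  obtain ⟨x, hx, hxM⟩ :=
    exists_seq_forall_of_frequently ((not_eventually.1 hM).and_eventually (hf.and hf_nonneg))
  have hlim_seq : ∀ᵐ a ∂μ, Tendsto (fun n => f (x n) a) atTop (𝓝 (g a)) :=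
    hlim.mono fun a ha => ha.comp hx
  have hg_nonneg : 0 ≤ᵐ[μ] g := by
    filter_upwards [hlim_seq, ae_all_iff.2 fun n => (hxM n).2.2] with a ha hpos
    exact ge_of_tendsto' ha hpos
  refine hg ⟨aestronglyMeasurable_of_tendsto_ae atTop (fun n => (hxM n).2.1.1) hlim_seq,
    (hasFiniteIntegral_iff_ofReal hg_nonneg).2 ?_⟩
  calc ∫⁻ a, ENNReal.ofReal (g a) ∂μ
      = ∫⁻ a, liminf (fun n => ENNReal.ofReal (f (x n) a)) atTop ∂μ := by
        refine lintegral_congr_ae (hlim_seq.mono fun a ha => ?_)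
        exact (((ENNReal.continuous_ofReal.tendsto _).comp ha).liminf_eq).symm
    _ ≤ liminf (fun n => ∫⁻ a, ENNReal.ofReal (f (x n) a) ∂μ) atTop :=
        lintegral_liminf_le' fun n => (hxM n).2.1.aemeasurable.ennreal_ofReal
    _ ≤ ENNReal.ofReal M := by
        refine liminf_le_of_frequently_le' (Frequently.of_forall fun n => ?_)
        rw [← ofReal_integral_eq_lintegral_ofReal (hxM n).2.1 (hxM n).2.2]
        exact ENNReal.ofReal_le_ofReal (not_le.1 (hxM n).1).le
    _ < ⊤ := ENNReal.ofReal_lt_top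

section RegularVariation

variable {ψ : ℝ → ℝ}

theorem integral_Ioi_one_const_mul_inv_comp_mul {u : ℝ} (hu : 0 < u) :
    ∫ t in Ioi 1, ψ u * (ψ (u * t))⁻¹ = ψ u * (∫ r in Ioi u, (ψ r)⁻¹) / u := by
  rw [integral_const_mul, integral_comp_mul_left_Ioi (fun r => (ψ r)⁻¹) 1 hu, mul_one,
    smul_eq_mul]
  field_simp

theorem tendsto_mul_inv_comp_mul_nhdsGT_zero
    (hrv : ∀ lam : ℝ, 0 < lam →
      Tendsto (fun x : ℝ => ψ (lam * x) / ψ x) (𝓝[>] 0) (𝓝 lam)) {t : ℝ} (ht : 0 < t) :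
    Tendsto (fun u => ψ u * (ψ (u * t))⁻¹) (𝓝[>] 0) (𝓝 t⁻¹) := by
  refine ((hrv t ht).inv₀ ht.ne').congr fun u => ?_
  rw [inv_div, mul_comm t u, div_eq_mul_inv]

end RegularVariation

theorem stmt14_general (ψ : ℝ → ℝ)
    (hpos : ∀ s : ℝ, 0 < s → 0 < ψ s)
    (hrv : ∀ lam : ℝ, 0 < lam →
      Tendsto (fun x : ℝ => ψ (lam * x) / ψ x) (nhdsWithin 0 (Ioi 0)) (nhds lam))
    (hint : ∀ u : ℝ, 0 < u → IntegrableOn (fun r : ℝ => (ψ r)⁻¹) (Ioi u)) :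
    Tendsto (fun u : ℝ => u / (ψ u * ∫ r in Ioi u, (ψ r)⁻¹))
      (nhdsWithin 0 (Ioi 0)) (nhds 0) := by
  have hpos_nhds : ∀ᶠ u in 𝓝[>] (0 : ℝ), 0 < u := self_mem_nhdsWithin
  have hint_scaled : ∀ᶠ u in 𝓝[>] (0 : ℝ),
      IntegrableOn (fun t => ψ u * (ψ (u * t))⁻¹) (Ioi 1) := by
    filter_upwards [hpos_nhds] with u hu
    exact ((integrableOn_Ioi_comp_mul_left_iff (fun r => (ψ r)⁻¹) 1 hu).2
      (by simpa only [mul_one] using hint u hu)).const_mul _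
  have hnonneg : ∀ᶠ u in 𝓝[>] (0 : ℝ),
      0 ≤ᵐ[volume.restrict (Ioi 1)] fun t => ψ u * (ψ (u * t))⁻¹ := by
    filter_upwards [hpos_nhds] with u hu
    filter_upwards [ae_restrict_mem measurableSet_Ioi] with t (ht : 1 < t)
    exact mul_nonneg (hpos u hu).le (inv_pos.2 (hpos _ (by positivity))).le
  have hlim : ∀ᵐ t ∂volume.restrict (Ioi 1),
      Tendsto (fun u => ψ u * (ψ (u * t))⁻¹) (𝓝[>] 0) (𝓝 t⁻¹) := by
    filter_upwards [ae_restrict_mem measurableSet_Ioi] with t (ht : 1 < t)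
    exact tendsto_mul_inv_comp_mul_nhdsGT_zero hrv (by positivity)
  have hgrowth := tendsto_integral_atTop_of_tendsto_ae_of_not_integrable hint_scaled hnonneg hlim
    not_integrableOn_Ioi_inv
  refine hgrowth.inv_tendsto_atTop.congr' ?_
  filter_upwards [hpos_nhds] with u hu
  rw [Pi.inv_apply, integral_Ioi_one_const_mul_inv_comp_mul hu, inv_div]

theorem stmt14 (ψ : ℝ → ℝ) (hcont : ContinuousOn ψ (Ioi 0))
    (hpos : ∀ s : ℝ, 0 < s → 0 < ψ s)
    (hrv : ∀ lam : ℝ, 0 < lam →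
      Tendsto (fun x : ℝ => ψ (lam * x) / ψ x) (nhdsWithin 0 (Ioi 0)) (nhds lam))
    (hint : ∀ u : ℝ, 0 < u → IntegrableOn (fun r : ℝ => (ψ r)⁻¹) (Ioi u)) :
    Tendsto (fun u : ℝ => u / (ψ u * ∫ r in Ioi u, (ψ r)⁻¹))
      (nhdsWithin 0 (Ioi 0)) (nhds 0) :=
  stmt14_general ψ hpos hrv hint
end

section
/- Let ν(r) = log²(2 + 1/r)·log(2 + r)/r² for r > 0 and define Ψ(x) = x²∫₀^{1/x} r² ν(r) dr + ∫_{1/x}^∞ ν(r) dr for x > 0. Then there exist constants 0 < c₁ ≤ c₂ such that c₁·x·log²(2+x)·log(2+1/x) ≤ Ψ(x) ≤ c₂·x·log²(2+x)·log(2+1/x) for all x > 0. -/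
/-! With `w r = r ^ 2 * ν r = log² (2 + 1/r) log (2 + r)` and `t = 1/x`, the claim reads
`Ψ x ≍ w t / t`. Both logarithms vary slowly: `log (2 + s u) ≤ 8 s^(1/4) log (2 + u)`
for `s ≥ 1`, so `w r ≤ 64 (t/r)^(1/2) w t` for `r ≤ t` and `w r ≤ 8 (r/t)^(1/4) w t`
for `r ≥ t`. Integrating these power bounds gives `∫₀ᵗ w ≤ 128 t w t` and
`∫ₜ^∞ w r / r² ≤ (32/3) w t / t`. Conversely `w ≥ w t / 2` on `[t/2, t]`, so
`∫₀ᵗ w ≥ t w t / 4`. -/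

open MeasureTheory Set Real

lemma one_add_two_mul_log_le {s : ℝ} (hs : 0 < s) : 1 + 2 * log s ≤ 8 * s ^ (4⁻¹ : ℝ) := by
  have h := log_le_sub_one_of_pos (rpow_pos_of_pos hs 4⁻¹)
  rw [log_rpow hs] at h
  linarith

lemma log_two_add_mul_le {s u : ℝ} (hs : 1 ≤ s) (hu : 0 ≤ u) :
    log (2 + s * u) ≤ 8 * s ^ (4⁻¹ : ℝ) * log (2 + u) := by
  have hlog_s : 0 ≤ log s := log_nonneg hs
  have hL : 1 / 2 ≤ log (2 + u) := by
    have := log_le_log (by norm_num) (by linarith : (2 : ℝ) ≤ 2 + u)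
    linarith [log_two_gt_d9]
  have hmul : log (2 + s * u) ≤ log s + log (2 + u) := by
    rw [← log_mul (by positivity) (by positivity)]
    exact log_le_log (by positivity) (by nlinarith)
  calc log (2 + s * u) ≤ (1 + 2 * log s) * log (2 + u) := by nlinarith
    _ ≤ 8 * s ^ (4⁻¹ : ℝ) * log (2 + u) :=
      mul_le_mul_of_nonneg_right (one_add_two_mul_log_le (by positivity)) (by linarith)

lemma log_two_add_two_mul_le {u : ℝ} (hu : 0 ≤ u) : log (2 + 2 * u) ≤ 2 * log (2 + u) := by
  calc log (2 + 2 * u) ≤ log ((2 + u) ^ 2) := log_le_log (by positivity) (by nlinarith)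
    _ = 2 * log (2 + u) := by rw [log_pow]; norm_num

lemma div_rpow_eq_mul_rpow_neg {r t α : ℝ} (hr : 0 < r) (ht : 0 ≤ t) :
    (t / r) ^ α = t ^ α * r ^ (-α) := by
  rw [div_rpow ht hr.le, rpow_neg hr.le, div_eq_mul_inv]

lemma integrableOn_Ioc_div_rpow {t α : ℝ} (ht : 0 < t) (hα : α < 1) :
    IntegrableOn (fun r => (t / r) ^ α) (Ioc 0 t) := by
  have h : IntegrableOn (fun r => t ^ α * r ^ (-α)) (Ioc 0 t) :=
    ((intervalIntegrable_iff_integrableOn_Ioc_of_le ht.le).1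
    (intervalIntegral.intervalIntegrable_rpow' (neg_lt_neg hα))).const_mul (t ^ α)
  exact h.congr_fun (fun r hr => (div_rpow_eq_mul_rpow_neg hr.1 ht.le).symm) measurableSet_Ioc

lemma integral_Ioc_div_rpow {t α : ℝ} (ht : 0 < t) (hα : α < 1) :
    ∫ r in Ioc 0 t, (t / r) ^ α = t / (1 - α) := by
  calc ∫ r in Ioc 0 t, (t / r) ^ α = ∫ r in Ioc 0 t, t ^ α * r ^ (-α) :=
        setIntegral_congr_fun measurableSet_Ioc fun r hr => div_rpow_eq_mul_rpow_neg hr.1 ht.le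
    _ = t ^ α * ((t ^ (-α + 1) - 0 ^ (-α + 1)) / (-α + 1)) := by
        rw [integral_const_mul, ← intervalIntegral.integral_of_le ht.le,
          integral_rpow (Or.inl (neg_lt_neg hα))]
    _ = t / (1 - α) := by
        rw [zero_rpow (by linarith), sub_zero, mul_div_assoc', ← rpow_add ht, add_neg_cancel_left,
          rpow_one, neg_add_eq_sub]

lemma div_rpow_div_sq_eq {r t β : ℝ} (hr : 0 < r) (ht : 0 < t) :
    (r / t) ^ β / r ^ 2 = t ^ (-β) * r ^ (β - 2) := by
  rw [div_rpow hr.le ht.le, rpow_sub hr, rpow_two, rpow_neg ht.le]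
  ring

lemma integrableOn_Ioi_div_rpow_div_sq {t β : ℝ} (ht : 0 < t) (hβ : β < 1) :
    IntegrableOn (fun r => (r / t) ^ β / r ^ 2) (Ioi t) := by
  have h : IntegrableOn (fun r => t ^ (-β) * r ^ (β - 2)) (Ioi t) :=
    (integrableOn_Ioi_rpow_of_lt (by linarith) ht).const_mul _
  exact h.congr_fun (fun r hr => (div_rpow_div_sq_eq (ht.trans hr) ht).symm) measurableSet_Ioi

lemma integral_Ioi_div_rpow_div_sq {t β : ℝ} (ht : 0 < t) (hβ : β < 1) :
    ∫ r in Ioi t, (r / t) ^ β / r ^ 2 = 1 / ((1 - β) * t) := by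
  calc ∫ r in Ioi t, (r / t) ^ β / r ^ 2 = ∫ r in Ioi t, t ^ (-β) * r ^ (β - 2) :=
        setIntegral_congr_fun measurableSet_Ioi fun r hr => div_rpow_div_sq_eq (ht.trans hr) ht
    _ = t ^ (-β) * (-t ^ (β - 2 + 1) / (β - 2 + 1)) := by
        rw [integral_const_mul, integral_Ioi_rpow_of_lt (by linarith) ht]
    _ = 1 / ((1 - β) * t) := by
        rw [mul_div_assoc', mul_neg, ← rpow_add ht, show -β + (β - 2 + 1) = -1 by ring,
          rpow_neg_one, show β - 2 + 1 = -(1 - β) by ring]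
        field_simp

/-- `r ^ 2 * ν r`, where `ν` is the Lévy density of the statement. -/
noncomputable def nuWeight (r : ℝ) : ℝ := log (2 + 1 / r) ^ 2 * log (2 + r)

lemma measurable_nuWeight : Measurable nuWeight := by
  unfold nuWeight
  fun_prop

lemma nuWeight_nonneg {r : ℝ} (hr : 0 ≤ r) : 0 ≤ nuWeight r :=
  mul_nonneg (sq_nonneg _) (log_nonneg (by linarith))

lemma nuWeight_le_of_le {r t : ℝ} (hr : 0 < r) (hrt : r ≤ t) :
    nuWeight r ≤ 64 * nuWeight t * (t / r) ^ (2⁻¹ : ℝ) := by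
  have ht : 0 < t := hr.trans_le hrt
  have hs : 1 ≤ t / r := (one_le_div hr).2 hrt
  have hinv : log (2 + 1 / r) ≤ 8 * (t / r) ^ (4⁻¹ : ℝ) * log (2 + 1 / t) := by
    have h := log_two_add_mul_le hs (one_div_pos.2 ht).le
    rwa [div_mul_div_comm, mul_one, mul_comm r t, div_mul_cancel_left₀ ht.ne', ← one_div] at h
  have hsq : ((t / r) ^ (4⁻¹ : ℝ)) ^ 2 = (t / r) ^ (2⁻¹ : ℝ) := by
    rw [← rpow_natCast, ← rpow_mul (by positivity)]
    norm_num
  calc nuWeight r ≤ (8 * (t / r) ^ (4⁻¹ : ℝ) * log (2 + 1 / t)) ^ 2 * log (2 + t) := by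
        unfold nuWeight
        gcongr
        all_goals exact log_nonneg (by linarith [one_div_pos.2 hr])
    _ = 64 * nuWeight t * (t / r) ^ (2⁻¹ : ℝ) := by
        rw [nuWeight, mul_pow, mul_pow, hsq]
        ring

lemma nuWeight_le_of_ge {r t : ℝ} (ht : 0 < t) (htr : t ≤ r) :
    nuWeight r ≤ 8 * nuWeight t * (r / t) ^ (4⁻¹ : ℝ) := by
  have hr : 0 < r := ht.trans_le htr
  have hs : 1 ≤ r / t := (one_le_div ht).2 htr
  have hlog : log (2 + r) ≤ 8 * (r / t) ^ (4⁻¹ : ℝ) * log (2 + t) := by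
    have h := log_two_add_mul_le hs ht.le
    rwa [div_mul_cancel₀ _ ht.ne'] at h
  calc nuWeight r ≤ log (2 + 1 / t) ^ 2 * (8 * (r / t) ^ (4⁻¹ : ℝ) * log (2 + t)) := by
        unfold nuWeight
        gcongr
        all_goals exact log_nonneg (by linarith [one_div_pos.2 hr])
    _ = 8 * nuWeight t * (r / t) ^ (4⁻¹ : ℝ) := by
        rw [nuWeight]
        ring

lemma nuWeight_le_two_mul {r t : ℝ} (ht : 0 < t) (hr : t / 2 ≤ r) (hrt : r ≤ t) :
    nuWeight t ≤ 2 * nuWeight r := by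
  have hr0 : 0 < r := by linarith
  calc nuWeight t ≤ log (2 + 1 / r) ^ 2 * (2 * log (2 + r)) := by
        unfold nuWeight
        gcongr
        · exact log_nonneg (by linarith)
        · exact log_nonneg (by linarith [one_div_pos.2 ht])
        · exact (log_le_log (by linarith) (by linarith)).trans (log_two_add_two_mul_le hr0.le)
    _ = 2 * nuWeight r := by
        rw [nuWeight]
        ring

lemma integrableOn_nuWeight {t : ℝ} (ht : 0 < t) : IntegrableOn nuWeight (Ioc 0 t) := by
  refine ((integrableOn_Ioc_div_rpow ht (by norm_num : (2⁻¹ : ℝ) < 1)).const_mul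
    (64 * nuWeight t)).mono' measurable_nuWeight.aestronglyMeasurable ?_
  refine (ae_restrict_iff' measurableSet_Ioc).2 (ae_of_all _ fun r hr => ?_)
  rw [norm_of_nonneg (nuWeight_nonneg hr.1.le)]
  exact nuWeight_le_of_le hr.1 hr.2

lemma integral_nuWeight_le {t : ℝ} (ht : 0 < t) :
    ∫ r in Ioc 0 t, nuWeight r ≤ 128 * t * nuWeight t := by
  calc ∫ r in Ioc 0 t, nuWeight r
        ≤ ∫ r in Ioc 0 t, 64 * nuWeight t * (t / r) ^ (2⁻¹ : ℝ) :=
        setIntegral_mono_on (integrableOn_nuWeight ht)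
          ((integrableOn_Ioc_div_rpow ht (by norm_num)).const_mul _) measurableSet_Ioc
          fun r hr => nuWeight_le_of_le hr.1 hr.2
    _ = 128 * t * nuWeight t := by
        rw [integral_const_mul, integral_Ioc_div_rpow ht (by norm_num)]
        ring

lemma le_integral_nuWeight {t : ℝ} (ht : 0 < t) :
    t / 4 * nuWeight t ≤ ∫ r in Ioc 0 t, nuWeight r := by
  have hsub : Ioc (t / 2) t ⊆ Ioc 0 t := Ioc_subset_Ioc (by linarith) le_rfl
  calc t / 4 * nuWeight t = ∫ _ in Ioc (t / 2) t, nuWeight t / 2 := by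
        rw [setIntegral_const, Real.volume_real_Ioc_of_le (by linarith), smul_eq_mul]
        ring
    _ ≤ ∫ r in Ioc (t / 2) t, nuWeight r :=
        setIntegral_mono_on (integrableOn_const measure_Ioc_lt_top.ne)
          ((integrableOn_nuWeight ht).mono_set hsub) measurableSet_Ioc
          fun r hr => by linarith [nuWeight_le_two_mul ht hr.1.le hr.2]
    _ ≤ ∫ r in Ioc 0 t, nuWeight r :=
        setIntegral_mono_set (integrableOn_nuWeight ht)
          ((ae_restrict_iff' measurableSet_Ioc).2 (ae_of_all _ fun r hr => nuWeight_nonneg hr.1.le))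
          hsub.eventuallyLE

lemma integral_nuWeight_div_sq_le {t : ℝ} (ht : 0 < t) :
    ∫ r in Ioi t, nuWeight r / r ^ 2 ≤ 32 / 3 * nuWeight t / t := by
  calc ∫ r in Ioi t, nuWeight r / r ^ 2
        ≤ ∫ r in Ioi t, 8 * nuWeight t * ((r / t) ^ (4⁻¹ : ℝ) / r ^ 2) :=
        integral_mono_of_nonneg
          ((ae_restrict_iff' measurableSet_Ioi).2 (ae_of_all _ fun r hr =>
            div_nonneg (nuWeight_nonneg (ht.trans hr).le) (sq_nonneg r)))
          ((integrableOn_Ioi_div_rpow_div_sq ht (by norm_num)).const_mul _)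
          ((ae_restrict_iff' measurableSet_Ioi).2 (ae_of_all _ fun r hr => by
            simpa only [mul_div_assoc] using
              div_le_div_of_nonneg_right (nuWeight_le_of_ge ht (le_of_lt hr)) (sq_nonneg r)))
    _ = 32 / 3 * nuWeight t / t := by
        rw [integral_const_mul, integral_Ioi_div_rpow_div_sq ht (by norm_num)]
        field_simp
        ring

noncomputable def psi (x : ℝ) : ℝ :=
  x ^ 2 * (∫ r in Ioc 0 (1 / x), nuWeight r) + ∫ r in Ioi (1 / x), nuWeight r / r ^ 2

lemma le_psi {x : ℝ} (hx : 0 < x) : 1 / 4 * (x * nuWeight (1 / x)) ≤ psi x := by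
  have ht : 0 < 1 / x := one_div_pos.2 hx
  have hfar_nonneg : 0 ≤ ∫ r in Ioi (1 / x), nuWeight r / r ^ 2 :=
    setIntegral_nonneg measurableSet_Ioi fun r hr =>
      div_nonneg (nuWeight_nonneg (ht.trans hr).le) (sq_nonneg r)
  calc 1 / 4 * (x * nuWeight (1 / x)) = x ^ 2 * (1 / x / 4 * nuWeight (1 / x)) := by field_simp
    _ ≤ x ^ 2 * ∫ r in Ioc 0 (1 / x), nuWeight r := by gcongr; exact le_integral_nuWeight ht
    _ ≤ psi x := le_add_of_nonneg_right hfar_nonneg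

lemma psi_le {x : ℝ} (hx : 0 < x) : psi x ≤ 139 * (x * nuWeight (1 / x)) := by
  have ht : 0 < 1 / x := one_div_pos.2 hx
  calc psi x
      ≤ x ^ 2 * (128 * (1 / x) * nuWeight (1 / x)) + 32 / 3 * nuWeight (1 / x) / (1 / x) := by
        unfold psi
        gcongr
        · exact integral_nuWeight_le ht
        · exact integral_nuWeight_div_sq_le ht
    _ = (128 + 32 / 3) * (x * nuWeight (1 / x)) := by field_simp
    _ ≤ 139 * (x * nuWeight (1 / x)) := by
        gcongr
        · exact mul_nonneg hx.le (nuWeight_nonneg ht.le)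
        · norm_num

theorem stmt15 :
    ∃ c₁ c₂ : ℝ, 0 < c₁ ∧ c₁ ≤ c₂ ∧
      ∀ x : ℝ, 0 < x →
        c₁ * (x * Real.log (2 + x) ^ 2 * Real.log (2 + 1 / x)) ≤
            x ^ 2 * (∫ r in Ioc (0 : ℝ) (1 / x),
                r ^ 2 * (Real.log (2 + 1 / r) ^ 2 * Real.log (2 + r) / r ^ 2)) +
              (∫ r in Ioi (1 / x),
                Real.log (2 + 1 / r) ^ 2 * Real.log (2 + r) / r ^ 2) ∧
          x ^ 2 * (∫ r in Ioc (0 : ℝ) (1 / x),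
                r ^ 2 * (Real.log (2 + 1 / r) ^ 2 * Real.log (2 + r) / r ^ 2)) +
              (∫ r in Ioi (1 / x),
                Real.log (2 + 1 / r) ^ 2 * Real.log (2 + r) / r ^ 2) ≤
            c₂ * (x * Real.log (2 + x) ^ 2 * Real.log (2 + 1 / x)) := by
  refine ⟨1 / 4, 139, by norm_num, by norm_num, fun x hx => ?_⟩
  have hpsi : x ^ 2 * (∫ r in Ioc (0 : ℝ) (1 / x),
        r ^ 2 * (log (2 + 1 / r) ^ 2 * log (2 + r) / r ^ 2)) +
      (∫ r in Ioi (1 / x), log (2 + 1 / r) ^ 2 * log (2 + r) / r ^ 2) = psi x := by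
    rw [psi]
    congr 2
    exact setIntegral_congr_fun measurableSet_Ioc fun r hr =>
      mul_div_cancel₀ (nuWeight r) (pow_ne_zero 2 hr.1.ne')
  have hscale : x * log (2 + x) ^ 2 * log (2 + 1 / x) = x * nuWeight (1 / x) := by
    rw [nuWeight, one_div_one_div]
    ring
  rw [hpsi, hscale]
  exact ⟨le_psi hx, psi_le hx⟩
end
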